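/- In the formal power series ring ℤ[t1^{±1}, t2^{±1}]^{S3}[[z]]/(z⁴) with e^{α1} = t1, e^{α2} = t2, the truncated infinite product Φ^{(2)} = (∏_{α∈Δ}(1-e^α z)²)(1-z)⁴ (∏_{α∈Δ}(1-e^α z²)⁴)(1-z²)⁹ (∏_{α∈Δ}(1-e^α z³)⁸)(1-z³)^{20} equals 1 - 2z·ch L(α1+α2) + z²(ch L(2α1+2α2) + 3 ch L(2α1+α2) + 3 ch L(α1+2α2)) - 2z³(ch L(2α1+3α2) + ch L(3α1+2α2) - ch L(2α1+α2) - ch L(α1+2α2)) modulo z⁴. -/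

import Mathlib

open Polynomial

/-- The Laurent polynomial ring `ℤ[t₁^{±1}, t₂^{±1}]`, as the group algebra of the root
lattice `ℤα₁ ⊕ ℤα₂` of `sl₃`; `e (m₁, m₂)` is `e^{m₁α₁+m₂α₂} = t₁^{m₁} t₂^{m₂}`. -/
abbrev ChRing : Type := AddMonoidAlgebra ℤ (ℤ × ℤ)

/-- The formal exponential `e^{m₁α₁ + m₂α₂}`. -/
noncomputable def expw (p : ℤ × ℤ) : ChRing := AddMonoidAlgebra.single p 1

/-- Sum of formal exponentials over a list of weights. -/
noncomputable def wsum (l : List (ℤ × ℤ)) : ChRing := (l.map expw).sum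

/-- The root system `Δ = {±α₁, ±α₂, ±(α₁+α₂)}` of `sl₃`, in `(α₁, α₂)`-coordinates. -/
def Δ0 : List (ℤ × ℤ) := [(1,0), (0,1), (1,1), (-1,0), (0,-1), (-1,-1)]
def Δ1 : List (ℤ × ℤ) := [(2,1), (-1,1), (-1,-2)]
def Δ2 : List (ℤ × ℤ) := [(1,2), (1,-1), (-2,-1)]
def Δ3 : List (ℤ × ℤ) := [(3,2), (3,1), (-1,2), (-1,-3), (-2,1), (-2,-3)]
def Δ4 : List (ℤ × ℤ) := [(2,3), (2,-1), (1,-2), (1,3), (-3,-1), (-3,-2)]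

/-- `{2α : α ∈ Δ}`. -/
def Δ0double : List (ℤ × ℤ) := Δ0.map fun p => (2 * p.1, 2 * p.2)

/-- The Weyl characters of the simple `sl₃`-modules `L(m₁α₁ + m₂α₂)` appearing below,
written out through their weight multiplicities. -/
noncomputable def ch11 : ChRing := wsum Δ0 + 2
noncomputable def ch21 : ChRing := wsum Δ1 + wsum Δ0 + 1
noncomputable def ch12 : ChRing := wsum Δ2 + wsum Δ0 + 1
noncomputable def ch22 : ChRing := wsum Δ0double + wsum Δ1 + wsum Δ2 + 2 * wsum Δ0 + 3
noncomputable def ch32 : ChRing := wsum Δ3 + wsum Δ0double + wsum Δ2 + 2 * wsum Δ1 + 2 * wsum Δ0 + 2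
noncomputable def ch23 : ChRing := wsum Δ4 + wsum Δ0double + wsum Δ1 + 2 * wsum Δ2 + 2 * wsum Δ0 + 2

/-- The truncated infinite product `Φ⁽²⁾` for `D = 2`, with exponents
`a₁ = 2, a₂ = 4, a₃ = 8` and `2a₁+b₁ = 4, 2a₂+b₂ = 9, 2a₃+b₃ = 20`. -/
noncomputable def Phi2 : Polynomial ChRing :=
  ((Δ0.map fun α => 1 - C (expw α) * X).prod) ^ 2 * (1 - X) ^ 4 *
    ((Δ0.map fun α => 1 - C (expw α) * X ^ 2).prod) ^ 4 * (1 - X ^ 2) ^ 9 *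
    ((Δ0.map fun α => 1 - C (expw α) * X ^ 3).prod) ^ 8 * (1 - X ^ 3) ^ 20

/-!
The roots come in pairs `±β`, and `(1 - e^β z)(1 - e^{-β} z) = 1 - c_β z + z²` with
`c_β = e^β + e^{-β}`, so `Φ⁽²⁾` is a polynomial in `c₁ = c_{α₁}`, `c₂ = c_{α₂}`,
`c₃ = c_{α₁+α₂}`. Modulo `z⁴` the factors in `z²` and `z³` only contribute their linear terms,
which leaves a short expansion. The characters on the right are polynomials in the `cᵢ` as well,
and the two sides agree up to the one relation `c₁c₂c₃ = c₁² + c₂² + c₃² - 4`.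
-/

section Nilpotent

variable {S : Type*} [CommRing S]

theorem one_sub_mul_mul_one_sub_mul_of_mul_eq_one {a b : S} (hab : a * b = 1) (y : S) :
    (1 - a * y) * (1 - b * y) = 1 - (a + b) * y + y ^ 2 := by
  linear_combination y ^ 2 * hab

theorem one_sub_pow_of_sq_eq_zero {y : S} (hy : y ^ 2 = 0) (n : ℕ) :
    (1 - y) ^ n = 1 - n * y := by
  induction n with
  | zero => simp
  | succ n ih =>
    rw [pow_succ, ih]
    push_cast
    linear_combination (n : S) * hy

theorem quadratic_prod_three_of_pow_four_eq_zero {x : S} (hx : x ^ 4 = 0) (a b c : S) :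
    (1 - a * x + x ^ 2) * (1 - b * x + x ^ 2) * (1 - c * x + x ^ 2) =
      1 - (a + b + c) * x + (a * b + a * c + b * c + 3) * x ^ 2
        - (2 * (a + b + c) + a * b * c) * x ^ 3 := by
  -- the product is palindromic: its coefficients of `x⁴, x⁵, x⁶` are those of `x², x, 1`
  linear_combination (a * b + a * c + b * c + 3 - (a + b + c) * x + x ^ 2) * hx

theorem quadratic_prod_three_of_sq_eq_zero {y : S} (hy : y ^ 2 = 0) (a b c : S) :
    (1 - a * y + y ^ 2) * (1 - b * y + y ^ 2) * (1 - c * y + y ^ 2) = 1 - (a + b + c) * y := by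
  rw [quadratic_prod_three_of_pow_four_eq_zero (by rw [show 4 = 2 * 2 from rfl, pow_mul, hy,
    zero_pow two_ne_zero])]
  linear_combination (a * b + a * c + b * c + 3 - (2 * (a + b + c) + a * b * c) * y) * hy

set_option maxRecDepth 2000 in
theorem truncated_product_expansion {x : S} (hx : x ^ 4 = 0) (s₁ s₂ s₃ : S) :
    (1 - s₁ * x + s₂ * x ^ 2 - s₃ * x ^ 3) ^ 2 * (1 - x) ^ 4 * (1 - s₁ * x ^ 2) ^ 4
      * (1 - x ^ 2) ^ 9 * (1 - s₁ * x ^ 3) ^ 8 * (1 - x ^ 3) ^ 20 =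
    1 - 2 * (s₁ + 2) * x + (s₁ ^ 2 + 2 * s₂ + 4 * s₁ - 3) * x ^ 2
      - 2 * (s₃ + s₁ * s₂ - 2 * s₁ ^ 2 + 4 * s₂ - 7 * s₁ - 6) * x ^ 3 := by
  have hx_pow (n : ℕ) (hn : 4 ≤ n) : x ^ n = 0 := pow_eq_zero_of_le hn hx
  have hsq (k : ℕ) (hk : 2 ≤ k) : (x ^ k) ^ 2 = 0 := by
    rw [← pow_mul]
    exact hx_pow _ (by omega)
  have hsq_mul (s : S) (k : ℕ) (hk : 2 ≤ k) : (s * x ^ k) ^ 2 = 0 := by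
    rw [mul_pow, hsq k hk, mul_zero]
  rw [one_sub_pow_of_sq_eq_zero (hsq_mul s₁ 2 le_rfl),
    one_sub_pow_of_sq_eq_zero (hsq_mul s₁ 3 (by norm_num)),
    one_sub_pow_of_sq_eq_zero (hsq 2 le_rfl), one_sub_pow_of_sq_eq_zero (hsq 3 (by norm_num))]
  ring_nf
  simp (disch := omega) only [hx_pow, mul_zero, zero_mul, add_zero]
  ring

theorem phi2_expansion_of_pow_four_eq_zero {x : S} (hx : x ^ 4 = 0) (a b c : S) :
    ((1 - a * x + x ^ 2) * (1 - b * x + x ^ 2) * (1 - c * x + x ^ 2)) ^ 2 * (1 - x) ^ 4 *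
      ((1 - a * x ^ 2 + (x ^ 2) ^ 2) * (1 - b * x ^ 2 + (x ^ 2) ^ 2)
        * (1 - c * x ^ 2 + (x ^ 2) ^ 2)) ^ 4 * (1 - x ^ 2) ^ 9 *
      ((1 - a * x ^ 3 + (x ^ 3) ^ 2) * (1 - b * x ^ 3 + (x ^ 3) ^ 2)
        * (1 - c * x ^ 3 + (x ^ 3) ^ 2)) ^ 8 * (1 - x ^ 3) ^ 20 =
    1 - 2 * (a + b + c + 2) * x
      + ((a + b + c) ^ 2 + 2 * (a * b + a * c + b * c) + 4 * (a + b + c) + 3) * x ^ 2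
      - 2 * (a * b * c + (a + b + c) * (a * b + a * c + b * c) - 2 * (a + b + c) ^ 2
        + 4 * (a * b + a * c + b * c) - 2 * (a + b + c) + 6) * x ^ 3 := by
  have hsq (k : ℕ) (hk : 2 ≤ k) : (x ^ k) ^ 2 = 0 := by
    rw [← pow_mul]
    exact pow_eq_zero_of_le (by omega) hx
  rw [quadratic_prod_three_of_pow_four_eq_zero hx,
    quadratic_prod_three_of_sq_eq_zero (hsq 2 le_rfl),
    quadratic_prod_three_of_sq_eq_zero (hsq 3 (by norm_num)),
    truncated_product_expansion hx]
  ring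

end Nilpotent

theorem expw_add (p q : ℤ × ℤ) : expw (p + q) = expw p * expw q := by
  simp [expw, AddMonoidAlgebra.single_mul_single]

theorem expw_zero : expw 0 = 1 := rfl

theorem expw_mul_expw_neg (p : ℤ × ℤ) : expw p * expw (-p) = 1 := by
  rw [← expw_add, add_neg_cancel, expw_zero]

noncomputable def expwSym (p : ℤ × ℤ) : ChRing := expw p + expw (-p)

local notation "c₁" => expwSym (1, 0)
local notation "c₂" => expwSym (0, 1)
local notation "c₃" => expwSym (1, 1)

theorem wsum_Δ0 : wsum Δ0 = c₁ + c₂ + c₃ := by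
  simp only [wsum, Δ0, expwSym, List.map_cons, List.map_nil, List.sum_cons, List.sum_nil,
    Prod.neg_mk]
  norm_num
  abel

/-- Fricke's trace identity `xyz = x² + y² + z² - 4` for the traces `x, y, z` of the commuting
matrices `diag(t₁, t₁⁻¹)`, `diag(t₂, t₂⁻¹)` and their product. -/
theorem expwSym_mul_expwSym_mul_expwSym : c₁ * c₂ * c₃ = c₁ ^ 2 + c₂ ^ 2 + c₃ ^ 2 - 4 := by
  simp only [expwSym, Prod.neg_mk, sq, add_mul, mul_add, ← expw_add, Prod.mk_add_mk]
  norm_num [Prod.mk_zero_zero, expw_zero]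
  ring

theorem wsum_Δ0double : wsum Δ0double = c₁ ^ 2 + c₂ ^ 2 + c₃ ^ 2 - 6 := by
  simp only [wsum, Δ0double, Δ0, expwSym, List.map_cons, List.map_nil, List.sum_cons,
    List.sum_nil, Prod.neg_mk, sq, add_mul, mul_add, ← expw_add, Prod.mk_add_mk]
  norm_num [Prod.mk_zero_zero, expw_zero]
  ring

theorem wsum_Δ1_add_wsum_Δ2 :
    wsum Δ1 + wsum Δ2 = c₁ * c₂ + c₁ * c₃ + c₂ * c₃ - (c₁ + c₂ + c₃) := by
  simp only [wsum, Δ1, Δ2, expwSym, List.map_cons, List.map_nil, List.sum_cons, List.sum_nil,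
    Prod.neg_mk, add_mul, mul_add, ← expw_add, Prod.mk_add_mk]
  norm_num [Prod.mk_zero_zero, expw_zero]
  ring

theorem wsum_Δ3_add_wsum_Δ4 :
    wsum Δ3 + wsum Δ4 = (c₁ + c₂ + c₃) * (c₁ * c₂ + c₁ * c₃ + c₂ * c₃) - 3 * (c₁ * c₂ * c₃)
      - 2 * (c₁ * c₂ + c₁ * c₃ + c₂ * c₃) - 2 * (c₁ + c₂ + c₃) := by
  simp only [wsum, Δ3, Δ4, expwSym, List.map_cons, List.map_nil, List.sum_cons, List.sum_nil,
    Prod.neg_mk, add_mul, mul_add, ← expw_add, Prod.mk_add_mk]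
  norm_num [Prod.mk_zero_zero, expw_zero]
  ring

theorem ch11_eq : ch11 = c₁ + c₂ + c₃ + 2 := by
  rw [ch11, wsum_Δ0]

theorem ch22_add_three_mul_ch21_add_three_mul_ch12 :
    ch22 + 3 * ch21 + 3 * ch12 =
      (c₁ + c₂ + c₃) ^ 2 + 2 * (c₁ * c₂ + c₁ * c₃ + c₂ * c₃) + 4 * (c₁ + c₂ + c₃) + 3 := by
  rw [ch22, ch21, ch12]
  linear_combination wsum_Δ0double + 4 * wsum_Δ1_add_wsum_Δ2 + 8 * wsum_Δ0

theorem ch23_add_ch32_sub_ch21_sub_ch12 :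
    ch23 + ch32 - ch21 - ch12 =
      c₁ * c₂ * c₃ + (c₁ + c₂ + c₃) * (c₁ * c₂ + c₁ * c₃ + c₂ * c₃) - 2 * (c₁ + c₂ + c₃) ^ 2
        + 4 * (c₁ * c₂ + c₁ * c₃ + c₂ * c₃) - 2 * (c₁ + c₂ + c₃) + 6 := by
  rw [ch23, ch32, ch21, ch12]
  linear_combination wsum_Δ3_add_wsum_Δ4 + 2 * wsum_Δ0double + 2 * wsum_Δ1_add_wsum_Δ2
    + 2 * wsum_Δ0 - 4 * expwSym_mul_expwSym_mul_expwSym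

theorem prod_Δ0_one_sub_C_expw_mul (Y : ChRing[X]) :
    (Δ0.map fun α => 1 - C (expw α) * Y).prod =
      (1 - C c₁ * Y + Y ^ 2) * (1 - C c₂ * Y + Y ^ 2) * (1 - C c₃ * Y + Y ^ 2) := by
  have pair (p : ℤ × ℤ) := one_sub_mul_mul_one_sub_mul_of_mul_eq_one
    (by rw [← map_mul, expw_mul_expw_neg, map_one] : C (expw p) * C (expw (-p)) = 1) Y
  simp only [expwSym, map_add]
  rw [← pair, ← pair, ← pair]
  simp only [Δ0, List.map_cons, List.map_nil, List.prod_cons, List.prod_nil, Prod.neg_mk]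
  norm_num
  ring

/-- Modulo `z⁴`, the product `Φ⁽²⁾` equals
`1 - 2z·ch L(α₁+α₂) + z²(ch L(2α₁+2α₂) + 3 ch L(2α₁+α₂) + 3 ch L(α₁+2α₂))
 - 2z³(ch L(2α₁+3α₂) + ch L(3α₁+2α₂) - ch L(2α₁+α₂) - ch L(α₁+2α₂))`. -/
theorem phi2_truncation :
    (X ^ 4 : Polynomial ChRing) ∣
      Phi2 - (1 - 2 * C ch11 * X + C (ch22 + 3 * ch21 + 3 * ch12) * X ^ 2
        - 2 * C (ch23 + ch32 - ch21 - ch12) * X ^ 3) := by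
  rw [← Ideal.mem_span_singleton, ← Ideal.Quotient.eq]
  set π := Ideal.Quotient.mk (Ideal.span {(X ^ 4 : ChRing[X])})
  have hx : π X ^ 4 = 0 := by
    rw [← map_pow, Ideal.Quotient.eq_zero_iff_mem]
    exact Ideal.mem_span_singleton_self _
  rw [Phi2, prod_Δ0_one_sub_C_expw_mul, prod_Δ0_one_sub_C_expw_mul, prod_Δ0_one_sub_C_expw_mul,
    ch11_eq, ch22_add_three_mul_ch21_add_three_mul_ch12, ch23_add_ch32_sub_ch21_sub_ch12]
  simp only [map_add, map_sub, map_mul, map_pow, map_one, map_ofNat]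
  exact phi2_expansion_of_pow_four_eq_zero (x := π X) hx _ _ _
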